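/- arXiv:0710.0967 — 3 statements merged into one kernel-verified Lean document; each statement's English description precedes it below -/
import Mathlib

section
/- Let n be a natural number, σ₁ a real number, and Σ₂ an n×n real diagonal matrix such that σ₁² ≠ (Σ₂ k k)² for every index k. Let f₁₂, f₂₁ be vectors in ℝⁿ, and define Stewart's (erroneous) vectors ĝ₂ = (σ₁²·I − Σ₂²)⁻¹ · (σ₁·f₂₁ − Σ₂·f₁₂) and ĥ₂ = (σ₁²·I − Σ₂²)⁻¹ · (σ₁·f₁₂ − Σ₂·f₂₁). Then (ĝ₂, ĥ₂) satisfies the system σ₁·ĝ₂ − Σ₂·ĥ₂ = f₂₁ and σ₁·ĥ₂ − Σ₂·ĝ₂ = f₁₂ if and only if Σ₂·(σ₁·f₁₂ − Σ₂·f₂₁) = 0 and Σ₂·(σ₁·f₂₁ − Σ₂·f₁₂) = 0. -/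
theorem stmt_6 (n : ℕ) (σ₁ : ℝ) (S₂ : Matrix (Fin n) (Fin n) ℝ)
    (hdiag : S₂.IsDiag) (h : ∀ k : Fin n, σ₁ ^ 2 ≠ (S₂ k k) ^ 2)
    (f₁₂ f₂₁ : Fin n → ℝ)
    (g₂' : Fin n → ℝ)
    (hg : g₂' = (σ₁ ^ 2 • (1 : Matrix (Fin n) (Fin n) ℝ) - S₂ ^ 2)⁻¹.mulVec
      (σ₁ • f₂₁ - S₂.mulVec f₁₂))
    (h₂' : Fin n → ℝ)
    (hh : h₂' = (σ₁ ^ 2 • (1 : Matrix (Fin n) (Fin n) ℝ) - S₂ ^ 2)⁻¹.mulVec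
      (σ₁ • f₁₂ - S₂.mulVec f₂₁)) :
    (σ₁ • g₂' - S₂.mulVec h₂' = f₂₁ ∧ σ₁ • h₂' - S₂.mulVec g₂' = f₁₂) ↔
    (S₂.mulVec (σ₁ • f₁₂ - S₂.mulVec f₂₁) = 0 ∧
     S₂.mulVec (σ₁ • f₂₁ - S₂.mulVec f₁₂) = 0) := by
  set v : Fin n → ℝ := S₂.diag with hv
  have hS : S₂ = Matrix.diagonal v := (hdiag.diagonal_diag).symm
  have hM : (σ₁ ^ 2 • (1 : Matrix (Fin n) (Fin n) ℝ) - S₂ ^ 2) =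
      Matrix.diagonal (fun k => σ₁ ^ 2 - v k ^ 2) := by
    rw [hS]
    ext i j
    by_cases hij : i = j <;>
      simp [Matrix.diagonal, Matrix.one_apply, hij, pow_two, Matrix.mul_apply,
        Finset.mul_sum]
  have hΔ : ∀ k, σ₁ ^ 2 - v k ^ 2 ≠ 0 := fun k => sub_ne_zero.mpr (h k)
  have hMinv : (σ₁ ^ 2 • (1 : Matrix (Fin n) (Fin n) ℝ) - S₂ ^ 2)⁻¹ =
      Matrix.diagonal (fun k => (σ₁ ^ 2 - v k ^ 2)⁻¹) := by
    rw [hM]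
    apply Matrix.inv_eq_right_inv
    rw [Matrix.diagonal_mul_diagonal]
    ext i j
    by_cases hij : i = j <;>
      simp [Matrix.diagonal, Matrix.one_apply, hij, mul_inv_cancel₀ (hΔ i), mul_inv_cancel₀ (hΔ j)]
  subst hg hh
  rw [hMinv, hS]
  simp only [funext_iff, Pi.sub_apply, Pi.smul_apply, Matrix.mulVec_diagonal,
    Pi.zero_apply, smul_eq_mul]
  rw [← forall_and, ← forall_and]
  apply forall_congr'
  intro k
  have hk := hΔ k
  constructor
  · rintro ⟨h1, h2⟩
    constructor
    · have := h1
      field_simp at this ⊢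
      nlinarith [this]
    · have := h2
      field_simp at this ⊢
      nlinarith [this]
  · rintro ⟨h1, h2⟩
    constructor
    · field_simp
      nlinarith [h1, h2]
    · field_simp
      nlinarith [h1, h2]
end

section
/- Let m, p, n, r be natural numbers and let u₁ ∈ ℝᵐ, v₁ ∈ ℝᵖ, let U₂ be an m×n real matrix, U₃ an m×r real matrix, V₂ a p×n real matrix, and E an m×p real matrix. Let σ₁ be a nonzero real number and Σ₂ an n×n real diagonal matrix with σ₁² ≠ (Σ₂ k k)² for every index k. Suppose g₂, h₂ ∈ ℝⁿ satisfy σ₁·g₂ − Σ₂·h₂ = U₂ᵀ·E·v₁ and σ₁·h₂ − Σ₂·g₂ = V₂ᵀ·Eᵀ·u₁, and let g₃ = σ₁⁻¹·U₃ᵀ·E·v₁. Then u₁ + U₂·g₂ + U₃·g₃ = u₁ + U₂·(σ₁²·I − Σ₂²)⁻¹·(σ₁·U₂ᵀ·E·v₁ + Σ₂·V₂ᵀ·Eᵀ·u₁) + σ₁⁻¹·U₃·U₃ᵀ·E·v₁. -/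
open Matrix

theorem stmt_9 (m p n r : ℕ) (u₁ : Fin m → ℝ) (v₁ : Fin p → ℝ)
    (U₂ : Matrix (Fin m) (Fin n) ℝ) (U₃ : Matrix (Fin m) (Fin r) ℝ)
    (V₂ : Matrix (Fin p) (Fin n) ℝ) (E : Matrix (Fin m) (Fin p) ℝ)
    (σ₁ : ℝ) (hσ : σ₁ ≠ 0)
    (S₂ : Matrix (Fin n) (Fin n) ℝ) (hdiag : S₂.IsDiag)
    (h : ∀ k : Fin n, σ₁ ^ 2 ≠ (S₂ k k) ^ 2)
    (g₂ h₂ : Fin n → ℝ)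
    (eq1 : σ₁ • g₂ - S₂.mulVec h₂ = U₂ᵀ.mulVec (E.mulVec v₁))
    (eq2 : σ₁ • h₂ - S₂.mulVec g₂ = V₂ᵀ.mulVec (Eᵀ.mulVec u₁))
    (g₃ : Fin r → ℝ)
    (hg₃ : g₃ = σ₁⁻¹ • U₃ᵀ.mulVec (E.mulVec v₁)) :
    u₁ + U₂.mulVec g₂ + U₃.mulVec g₃
      = u₁ + U₂.mulVec ((σ₁ ^ 2 • (1 : Matrix (Fin n) (Fin n) ℝ) - S₂ ^ 2)⁻¹.mulVec
          (σ₁ • U₂ᵀ.mulVec (E.mulVec v₁) + S₂.mulVec (V₂ᵀ.mulVec (Eᵀ.mulVec u₁))))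
        + σ₁⁻¹ • U₃.mulVec (U₃ᵀ.mulVec (E.mulVec v₁)) := by
  set M : Matrix (Fin n) (Fin n) ℝ := σ₁ ^ 2 • (1 : Matrix (Fin n) (Fin n) ℝ) - S₂ ^ 2 with hM
  have hS : S₂ = Matrix.diagonal S₂.diag := hdiag.diagonal_diag.symm
  have hS2 : S₂ ^ 2 = Matrix.diagonal (fun k => (S₂ k k) ^ 2) := by
    rw [pow_two]
    conv_lhs => rw [hS]
    rw [Matrix.diagonal_mul_diagonal]
    simp [pow_two, Matrix.diag]
  have hMd : M = Matrix.diagonal (fun k => σ₁ ^ 2 - (S₂ k k) ^ 2) := by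
    rw [hM, hS2]
    ext i j
    by_cases hij : i = j <;>
      simp [Matrix.one_apply, hij]
  have hdet : IsUnit M.det := by
    rw [hMd, Matrix.det_diagonal]
    exact (Finset.prod_ne_zero_iff.2 fun k _ => sub_ne_zero.2 (h k)).isUnit
  -- key: M.mulVec g₂ = σ₁ • a + S₂ b
  have key : M.mulVec g₂ = σ₁ • U₂ᵀ.mulVec (E.mulVec v₁)
      + S₂.mulVec (V₂ᵀ.mulVec (Eᵀ.mulVec u₁)) := by
    rw [← eq1, ← eq2]
    have e1 : M.mulVec g₂ = σ₁ ^ 2 • g₂ - S₂.mulVec (S₂.mulVec g₂) := by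
      rw [hM, Matrix.sub_mulVec, Matrix.smul_mulVec, Matrix.one_mulVec, pow_two S₂, ← Matrix.mulVec_mulVec]
    rw [e1, Matrix.mulVec_sub, smul_sub, Matrix.mulVec_smul, pow_two, ← smul_smul]
    abel
  have hg₂ : g₂ = M⁻¹.mulVec (σ₁ • U₂ᵀ.mulVec (E.mulVec v₁)
      + S₂.mulVec (V₂ᵀ.mulVec (Eᵀ.mulVec u₁))) := by
    rw [← key, Matrix.mulVec_mulVec, Matrix.nonsing_inv_mul M hdet, Matrix.one_mulVec]
  rw [← hg₂, hg₃]
  congr 1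
  rw [Matrix.mulVec_smul]
end

section
/- Let m, p, n be natural numbers and let u₁ ∈ ℝᵐ, v₁ ∈ ℝᵖ, let U₂ be an m×n real matrix, V₂ a p×n real matrix, and E an m×p real matrix. Let σ₁ be a real number and Σ₂ an n×n real diagonal matrix with σ₁² ≠ (Σ₂ k k)² for every index k. Suppose g₂, h₂ ∈ ℝⁿ satisfy σ₁·g₂ − Σ₂·h₂ = U₂ᵀ·E·v₁ and σ₁·h₂ − Σ₂·g₂ = V₂ᵀ·Eᵀ·u₁. Then v₁ + V₂·h₂ = v₁ + V₂·(σ₁²·I − Σ₂²)⁻¹·(σ₁·V₂ᵀ·Eᵀ·u₁ + Σ₂·U₂ᵀ·E·v₁). -/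
open Matrix

theorem stmt_10 (m p n : ℕ) (u₁ : Fin m → ℝ) (v₁ : Fin p → ℝ)
    (U₂ : Matrix (Fin m) (Fin n) ℝ) (V₂ : Matrix (Fin p) (Fin n) ℝ)
    (E : Matrix (Fin m) (Fin p) ℝ)
    (σ₁ : ℝ) (S₂ : Matrix (Fin n) (Fin n) ℝ) (hdiag : S₂.IsDiag)
    (h : ∀ k : Fin n, σ₁ ^ 2 ≠ (S₂ k k) ^ 2)
    (g₂ h₂ : Fin n → ℝ)
    (eq1 : σ₁ • g₂ - S₂.mulVec h₂ = U₂ᵀ.mulVec (E.mulVec v₁))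
    (eq2 : σ₁ • h₂ - S₂.mulVec g₂ = V₂ᵀ.mulVec (Eᵀ.mulVec u₁)) :
    v₁ + V₂.mulVec h₂
      = v₁ + V₂.mulVec ((σ₁ ^ 2 • (1 : Matrix (Fin n) (Fin n) ℝ) - S₂ ^ 2)⁻¹.mulVec
          (σ₁ • V₂ᵀ.mulVec (Eᵀ.mulVec u₁) + S₂.mulVec (U₂ᵀ.mulVec (E.mulVec v₁)))) := by
  set A : Matrix (Fin n) (Fin n) ℝ := σ₁ ^ 2 • (1 : Matrix (Fin n) (Fin n) ℝ) - S₂ ^ 2 with hA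
  have hS : S₂ = Matrix.diagonal (fun k => S₂ k k) := by
    ext i j
    by_cases hij : i = j
    · subst hij; simp
    · simp [Matrix.diagonal, hij, hdiag hij]
  have hsq : S₂ ^ 2 = Matrix.diagonal (fun k => (S₂ k k) ^ 2) := by
    rw [pow_two, hS]
    simp [Matrix.diagonal_mul_diagonal, pow_two]
  have hAd : A = Matrix.diagonal (fun k => σ₁ ^ 2 - (S₂ k k) ^ 2) := by
    rw [hA, hsq]
    ext i j
    by_cases hij : i = j
    · subst hij; simp
    · simp [Matrix.diagonal_apply, Matrix.one_apply, hij]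
  have hdet : IsUnit A.det := by
    rw [hAd, Matrix.det_diagonal]
    exact (Finset.prod_ne_zero_iff.2 fun k _ => sub_ne_zero.2 (h k)).isUnit
  have hApow : A.mulVec h₂ = σ₁ ^ 2 • h₂ - S₂.mulVec (S₂.mulVec h₂) := by
    rw [hA, Matrix.sub_mulVec, Matrix.smul_mulVec, Matrix.one_mulVec,
      Matrix.mulVec_mulVec, ← pow_two]
  have key : A.mulVec h₂
      = σ₁ • V₂ᵀ.mulVec (Eᵀ.mulVec u₁) + S₂.mulVec (U₂ᵀ.mulVec (E.mulVec v₁)) := by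
    rw [← eq1, ← eq2, hApow, smul_sub, Matrix.mulVec_sub, Matrix.mulVec_smul, smul_smul,
      ← pow_two]
    abel
  have hinv : A⁻¹.mulVec (A.mulVec h₂) = h₂ := by
    rw [Matrix.mulVec_mulVec, Matrix.nonsing_inv_mul A hdet, Matrix.one_mulVec]
  rw [← key, hinv]
end
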